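/- Let Q = {(ξ,θ) ∈ ℝ^{p+n} : Aξ + Bθ ≤ c} be a nonempty polyhedron and d ∈ ℝᵖ satisfy −d = Aᵀλ₀ for some λ₀ ≥ 0. For z ∈ ℝⁿ, let (θ̂(z), ξ̂(z)) minimize (1/2)‖θ − z‖₂² + dᵀξ over Q. Then for Lebesgue-almost every y ∈ ℝⁿ the following holds: with J_y = {1 ≤ i ≤ m : ⟨a_i, ξ̂(y)⟩ + ⟨b_i, θ̂(y)⟩ = c_i}, there is an open neighborhood U of y such that for every z ∈ U, θ̂(z) equals the θ-component θ̃(z) of a minimizer of (1/2)‖θ − z‖₂² + dᵀξ over the affine set {(ξ,θ) ∈ ℝ^{p+n} : A_{J_y} ξ + B_{J_y} θ = c_{J_y}}. -/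

import Mathlib

/-!
Call `z` stationary for a set `J` of constraints if some feasible `(ξ, θ)` with the constraints
of `J` binding satisfies the first-order condition `0 ≤ dᵀu + (θ - z)ᵀw` along every direction
`(u, w)` with `A_J u + B_J w ≤ 0`. This condition is jointly linear in `(z, ξ, θ)`, so the
stationary points form a convex set, whose frontier is Lebesgue-null. Each `y` is stationary
for `J_y` (first-order condition at the minimizer, the inactive constraints having slack), so
almost every `y` is an interior point of the stationary set of `J_y`. At a stationary `z` the
witness minimizes the objective both over `Q`, where strong convexity in `θ` forces `θ = θ̂(z)`,
and over the affine set `A_J ξ + B_J θ = c_J`, whose directions satisfy `A_J u + B_J w = 0`.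
-/

open Matrix MeasureTheory Filter Topology

lemma Convex.ae_mem_interior {E : Type*} [NormedAddCommGroup E] [NormedSpace ℝ E]
    [MeasurableSpace E] [BorelSpace E] [FiniteDimensional ℝ E] (μ : Measure E)
    [μ.IsAddHaarMeasure] {s : Set E} (hs : Convex ℝ s) :
    ∀ᵐ x ∂μ, x ∈ s → x ∈ interior s := by
  refine ae_iff.2 (measure_mono_null (fun x hx => ?_) (hs.addHaar_frontier μ))
  push Not at hx
  exact ⟨subset_closure hx.1, hx.2⟩

lemma nonneg_of_eventually_nonneg_mul_add_sq {G W : ℝ}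
    (h : ∀ᶠ t in 𝓝[>] (0 : ℝ), 0 ≤ t * G + t ^ 2 * W) : 0 ≤ G := by
  have hlim : Tendsto (fun t : ℝ => G + t * W) (𝓝[>] 0) (𝓝 G) :=
    ((by fun_prop : Continuous fun t : ℝ => G + t * W).tendsto' 0 G (by simp)).mono_left
      nhdsWithin_le_nhds
  refine ge_of_tendsto hlim ?_
  filter_upwards [h, self_mem_nhdsWithin] with t ht (htpos : 0 < t)
  exact nonneg_of_mul_nonneg_right (by linear_combination ht) htpos

section

variable {σ ι κ : Type*} [Fintype ι] [Fintype κ]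

noncomputable def objective (d : ι → ℝ) (z : κ → ℝ) (ξ : ι → ℝ) (θ : κ → ℝ) : ℝ :=
  (1 / 2) * (∑ j, (θ j - z j) ^ 2) + d ⬝ᵥ ξ

lemma objective_sub_objective (d : ι → ℝ) (z : κ → ℝ) (ξ₀ ξ : ι → ℝ) (θ₀ θ : κ → ℝ) :
    objective d z ξ θ - objective d z ξ₀ θ₀
      = d ⬝ᵥ (ξ - ξ₀) + (θ₀ - z) ⬝ᵥ (θ - θ₀) + (1 / 2) * ((θ - θ₀) ⬝ᵥ (θ - θ₀)) := by
  have hquad : (1 / 2) * (∑ j, (θ j - z j) ^ 2) - (1 / 2) * (∑ j, (θ₀ j - z j) ^ 2)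
      = (θ₀ - z) ⬝ᵥ (θ - θ₀) + (1 / 2) * ((θ - θ₀) ⬝ᵥ (θ - θ₀)) := by
    simp only [dotProduct, Pi.sub_apply, Finset.mul_sum, ← Finset.sum_sub_distrib,
      ← Finset.sum_add_distrib]
    exact Finset.sum_congr rfl fun _ _ => by ring
  rw [objective, objective, dotProduct_sub]
  linarith

lemma objective_add_le_of_nonneg {d : ι → ℝ} {z : κ → ℝ} {ξ₀ ξ : ι → ℝ} {θ₀ θ : κ → ℝ}
    (h : 0 ≤ d ⬝ᵥ (ξ - ξ₀) + (θ₀ - z) ⬝ᵥ (θ - θ₀)) :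
    objective d z ξ₀ θ₀ + (1 / 2) * ((θ - θ₀) ⬝ᵥ (θ - θ₀)) ≤ objective d z ξ θ := by
  linarith [objective_sub_objective d z ξ₀ ξ θ₀ θ]

def activeSet (A : Matrix σ ι ℝ) (B : Matrix σ κ ℝ) (c : σ → ℝ) (ξ : ι → ℝ) (θ : κ → ℝ) :
    Set σ :=
  {i | A i ⬝ᵥ ξ + B i ⬝ᵥ θ = c i}

variable {A : Matrix σ ι ℝ} {B : Matrix σ κ ℝ} {c : σ → ℝ} {d : ι → ℝ}

lemma eventually_feasible_add_smul [Finite σ] {ξ₀ u : ι → ℝ} {θ₀ w : κ → ℝ}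
    (h₀ : A *ᵥ ξ₀ + B *ᵥ θ₀ ≤ c)
    (hdir : ∀ i ∈ activeSet A B c ξ₀ θ₀, A i ⬝ᵥ u + B i ⬝ᵥ w ≤ 0) :
    ∀ᶠ t in 𝓝[>] (0 : ℝ), A *ᵥ (ξ₀ + t • u) + B *ᵥ (θ₀ + t • w) ≤ c := by
  have hrow : ∀ (t : ℝ) i, (A *ᵥ (ξ₀ + t • u) + B *ᵥ (θ₀ + t • w)) i
      = (A i ⬝ᵥ ξ₀ + B i ⬝ᵥ θ₀) + t * (A i ⬝ᵥ u + B i ⬝ᵥ w) := fun t i => by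
    change A i ⬝ᵥ (ξ₀ + t • u) + B i ⬝ᵥ (θ₀ + t • w) = _
    simp only [dotProduct_add, dotProduct_smul, smul_eq_mul]
    ring
  simp only [Pi.le_def, hrow]
  refine eventually_all.2 fun i => ?_
  have hi₀ : A i ⬝ᵥ ξ₀ + B i ⬝ᵥ θ₀ ≤ c i := h₀ i
  rcases hi₀.eq_or_lt with hi | hi
  · filter_upwards [self_mem_nhdsWithin] with t (ht : 0 < t)
    nlinarith [hdir i hi]
  · have hlim : Tendsto (fun t : ℝ => (A i ⬝ᵥ ξ₀ + B i ⬝ᵥ θ₀) + t * (A i ⬝ᵥ u + B i ⬝ᵥ w))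
        (𝓝[>] 0) (𝓝 (A i ⬝ᵥ ξ₀ + B i ⬝ᵥ θ₀)) :=
      ((by fun_prop : Continuous fun t : ℝ => (A i ⬝ᵥ ξ₀ + B i ⬝ᵥ θ₀) + t * _).tendsto' 0 _
        (by simp)).mono_left nhdsWithin_le_nhds
    exact (hlim.eventually_lt_const hi).mono fun _ => le_of_lt

lemma first_order_condition [Finite σ] {z : κ → ℝ} {ξ₀ : ι → ℝ} {θ₀ : κ → ℝ}
    (h₀ : A *ᵥ ξ₀ + B *ᵥ θ₀ ≤ c)
    (hmin : ∀ ξ θ, A *ᵥ ξ + B *ᵥ θ ≤ c → objective d z ξ₀ θ₀ ≤ objective d z ξ θ)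
    {u : ι → ℝ} {w : κ → ℝ} (hdir : ∀ i ∈ activeSet A B c ξ₀ θ₀, A i ⬝ᵥ u + B i ⬝ᵥ w ≤ 0) :
    0 ≤ d ⬝ᵥ u + (θ₀ - z) ⬝ᵥ w := by
  refine nonneg_of_eventually_nonneg_mul_add_sq (W := (1 / 2) * (w ⬝ᵥ w)) ?_
  filter_upwards [eventually_feasible_add_smul h₀ hdir] with t ht
  have hexp := objective_sub_objective d z ξ₀ (ξ₀ + t • u) θ₀ (θ₀ + t • w)
  simp only [add_sub_cancel_left, dotProduct_smul, smul_dotProduct, smul_eq_mul] at hexp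
  linear_combination hexp + hmin _ _ ht

def stationarySet (A : Matrix σ ι ℝ) (B : Matrix σ κ ℝ) (c : σ → ℝ) (d : ι → ℝ) (J : Set σ) :
    Set (κ → ℝ) :=
  {z | ∃ ξ θ, A *ᵥ ξ + B *ᵥ θ ≤ c ∧ J ⊆ activeSet A B c ξ θ ∧
    ∀ u w, (∀ i ∈ J, A i ⬝ᵥ u + B i ⬝ᵥ w ≤ 0) → 0 ≤ d ⬝ᵥ u + (θ - z) ⬝ᵥ w}

variable (A B c d) in
lemma convex_stationarySet (J : Set σ) : Convex ℝ (stationarySet A B c d J) := by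
  rintro z₁ ⟨ξ₁, θ₁, hf₁, hJ₁, hs₁⟩ z₂ ⟨ξ₂, θ₂, hf₂, hJ₂, hs₂⟩ a b ha hb hab
  refine ⟨a • ξ₁ + b • ξ₂, a • θ₁ + b • θ₂, fun i => ?_, fun i hi => ?_, fun u w hdir => ?_⟩
  · have h₁ := mul_le_mul_of_nonneg_left (hf₁ i) ha
    have h₂ := mul_le_mul_of_nonneg_left (hf₂ i) hb
    simp only [mulVec_add, mulVec_smul, Pi.add_apply, Pi.smul_apply, smul_eq_mul] at h₁ h₂ ⊢
    linear_combination h₁ + h₂ + c i * hab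
  · have h₁ : A i ⬝ᵥ ξ₁ + B i ⬝ᵥ θ₁ = c i := hJ₁ hi
    have h₂ : A i ⬝ᵥ ξ₂ + B i ⬝ᵥ θ₂ = c i := hJ₂ hi
    change A i ⬝ᵥ (a • ξ₁ + b • ξ₂) + B i ⬝ᵥ (a • θ₁ + b • θ₂) = c i
    simp only [dotProduct_add, dotProduct_smul, smul_eq_mul]
    linear_combination a * h₁ + b * h₂ + c i * hab
  · have hsplit : d ⬝ᵥ u + (a • θ₁ + b • θ₂ - (a • z₁ + b • z₂)) ⬝ᵥ w
        = a * (d ⬝ᵥ u + (θ₁ - z₁) ⬝ᵥ w) + b * (d ⬝ᵥ u + (θ₂ - z₂) ⬝ᵥ w) := by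
      simp only [sub_dotProduct, add_dotProduct, smul_dotProduct, smul_eq_mul]
      linear_combination (-(d ⬝ᵥ u)) * hab
    rw [hsplit]
    exact add_nonneg (mul_nonneg ha (hs₁ u w hdir)) (mul_nonneg hb (hs₂ u w hdir))

lemma mem_stationarySet_activeSet [Finite σ] {z : κ → ℝ} {ξ₀ : ι → ℝ} {θ₀ : κ → ℝ}
    (h₀ : A *ᵥ ξ₀ + B *ᵥ θ₀ ≤ c)
    (hmin : ∀ ξ θ, A *ᵥ ξ + B *ᵥ θ ≤ c → objective d z ξ₀ θ₀ ≤ objective d z ξ θ) :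
    z ∈ stationarySet A B c d (activeSet A B c ξ₀ θ₀) :=
  ⟨ξ₀, θ₀, h₀, subset_rfl, fun _ _ hdir => first_order_condition h₀ hmin hdir⟩

lemma exists_affine_minimizer_of_mem_stationarySet {J : Set σ} {z : κ → ℝ}
    {ξ₀ : ι → ℝ} {θ₀ : κ → ℝ} (h₀ : A *ᵥ ξ₀ + B *ᵥ θ₀ ≤ c)
    (hmin : ∀ ξ θ, A *ᵥ ξ + B *ᵥ θ ≤ c → objective d z ξ₀ θ₀ ≤ objective d z ξ θ)
    (hz : z ∈ stationarySet A B c d J) :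
    ∃ ξt, (∀ i ∈ J, A i ⬝ᵥ ξt + B i ⬝ᵥ θ₀ = c i) ∧
      ∀ ξ θ, (∀ i ∈ J, A i ⬝ᵥ ξ + B i ⬝ᵥ θ = c i) →
        objective d z ξt θ₀ ≤ objective d z ξ θ := by
  obtain ⟨ξ, θ, hf, hJ, hstat⟩ := hz
  have hsq_nonneg (v : κ → ℝ) : 0 ≤ v ⬝ᵥ v := by simpa using dotProduct_self_star_nonneg v
  have hθ : θ = θ₀ := by
    have hle := objective_add_le_of_nonneg <| hstat (ξ₀ - ξ) (θ₀ - θ) fun i hi => by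
      have hi₀ : A i ⬝ᵥ ξ₀ + B i ⬝ᵥ θ₀ ≤ c i := h₀ i
      have hiJ : A i ⬝ᵥ ξ + B i ⬝ᵥ θ = c i := hJ hi
      rw [dotProduct_sub, dotProduct_sub]
      linarith
    have hsq : (θ₀ - θ) ⬝ᵥ (θ₀ - θ) ≤ 0 := by linarith [hmin ξ θ hf]
    exact (sub_eq_zero.1 (dotProduct_self_eq_zero.1 (hsq.antisymm (hsq_nonneg _)))).symm
  subst hθ
  refine ⟨ξ, fun i hi => hJ hi, fun ξ' θ' hJ' => ?_⟩
  have hle := objective_add_le_of_nonneg <| hstat (ξ' - ξ) (θ' - θ) fun i hi => by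
    have hiJ : A i ⬝ᵥ ξ + B i ⬝ᵥ θ = c i := hJ hi
    rw [dotProduct_sub, dotProduct_sub]
    linarith [hJ' i hi]
  linarith [hsq_nonneg (θ' - θ)]

end

theorem local_affine_equivalence_linearly_perturbed_general {m p n : ℕ}
    (A : Matrix (Fin m) (Fin p) ℝ) (B : Matrix (Fin m) (Fin n) ℝ)
    (c : Fin m → ℝ) (d : Fin p → ℝ)
    (θhat : (Fin n → ℝ) → (Fin n → ℝ)) (ξhat : (Fin n → ℝ) → (Fin p → ℝ))
    (hmin : ∀ z, A.mulVec (ξhat z) + B.mulVec (θhat z) ≤ c ∧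
      ∀ ξ θ, A.mulVec ξ + B.mulVec θ ≤ c →
        (1 / 2) * (∑ j, (θhat z j - z j) ^ 2) + d ⬝ᵥ ξhat z
          ≤ (1 / 2) * (∑ j, (θ j - z j) ^ 2) + d ⬝ᵥ ξ) :
    ∀ᵐ y ∂(volume : Measure (Fin n → ℝ)),
      ∃ U : Set (Fin n → ℝ), IsOpen U ∧ y ∈ U ∧
        ∀ z ∈ U, ∃ ξt : Fin p → ℝ,
          (∀ i ∈ {i : Fin m | A i ⬝ᵥ ξhat y + B i ⬝ᵥ θhat y = c i},
            A i ⬝ᵥ ξt + B i ⬝ᵥ θhat z = c i) ∧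
          ∀ ξ θ, (∀ i ∈ {i : Fin m | A i ⬝ᵥ ξhat y + B i ⬝ᵥ θhat y = c i},
              A i ⬝ᵥ ξ + B i ⬝ᵥ θ = c i) →
            (1 / 2) * (∑ j, (θhat z j - z j) ^ 2) + d ⬝ᵥ ξt
              ≤ (1 / 2) * (∑ j, (θ j - z j) ^ 2) + d ⬝ᵥ ξ := by
  have hint := ae_all_iff.2 fun J : Set (Fin m) =>
    (convex_stationarySet A B c d J).ae_mem_interior volume
  filter_upwards [hint] with y hy
  refine ⟨_, isOpen_interior, hy _ (mem_stationarySet_activeSet (hmin y).1 (hmin y).2),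
    fun z hz => ?_⟩
  exact exists_affine_minimizer_of_mem_stationarySet (hmin z).1 (hmin z).2 (interior_subset hz)

/-- Local equivalence of the linearly perturbed partial projection onto
`Q = {(ξ,θ) : Aξ + Bθ ≤ c}` with the linearly perturbed partial projection onto the
affine set of binding constraints: for almost every `y`, there is an open neighborhood
`U` of `y` such that for every `z ∈ U`, `θ̂(z)` is the θ-component of a minimizer of
`(1/2)‖θ − z‖₂² + dᵀξ` over `{(ξ,θ) : A_{J_y} ξ + B_{J_y} θ = c_{J_y}}`. -/
theorem local_affine_equivalence_linearly_perturbed {m p n : ℕ}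
    (A : Matrix (Fin m) (Fin p) ℝ) (B : Matrix (Fin m) (Fin n) ℝ)
    (c : Fin m → ℝ) (d : Fin p → ℝ)
    (hQ : ∃ ξ : Fin p → ℝ, ∃ θ : Fin n → ℝ, A.mulVec ξ + B.mulVec θ ≤ c)
    (hd : ∃ lam₀ : Fin m → ℝ, 0 ≤ lam₀ ∧ Aᵀ.mulVec lam₀ = -d)
    (θhat : (Fin n → ℝ) → (Fin n → ℝ)) (ξhat : (Fin n → ℝ) → (Fin p → ℝ))
    (hmin : ∀ z, A.mulVec (ξhat z) + B.mulVec (θhat z) ≤ c ∧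
      ∀ ξ θ, A.mulVec ξ + B.mulVec θ ≤ c →
        (1 / 2) * (∑ j, (θhat z j - z j) ^ 2) + d ⬝ᵥ ξhat z
          ≤ (1 / 2) * (∑ j, (θ j - z j) ^ 2) + d ⬝ᵥ ξ) :
    ∀ᵐ y ∂(volume : Measure (Fin n → ℝ)),
      ∃ U : Set (Fin n → ℝ), IsOpen U ∧ y ∈ U ∧
        ∀ z ∈ U, ∃ ξt : Fin p → ℝ,
          (∀ i ∈ {i : Fin m | A i ⬝ᵥ ξhat y + B i ⬝ᵥ θhat y = c i},
            A i ⬝ᵥ ξt + B i ⬝ᵥ θhat z = c i) ∧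
          ∀ ξ θ, (∀ i ∈ {i : Fin m | A i ⬝ᵥ ξhat y + B i ⬝ᵥ θhat y = c i},
              A i ⬝ᵥ ξ + B i ⬝ᵥ θ = c i) →
            (1 / 2) * (∑ j, (θhat z j - z j) ^ 2) + d ⬝ᵥ ξt
              ≤ (1 / 2) * (∑ j, (θ j - z j) ^ 2) + d ⬝ᵥ ξ :=
  local_affine_equivalence_linearly_perturbed_general A B c d θhat ξhat hmin
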